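/- If a nonnegative tensor A is a Q-tensor, then every principal sub-tensor of A is also a Q-tensor. -/
import Mathlib


open Finset

/-- The $i$-th component of $\mathcal{A}x^{m-1}$ for an order-$(m+2)$ tensor over index type `ι`. -/
def Axm1 {m : ℕ} {ι : Type*} [Fintype ι] (A : (Fin (m + 2) → ι) → ℝ) (x : ι → ℝ) (i : ι) : ℝ :=
  ∑ f : Fin (m + 1) → ι, A (Fin.cons i f) * ∏ j, x (f j)

/-- `x` solves the tensor complementarity problem $(q, \mathcal{A})$. -/
def IsTCPSol {m : ℕ} {ι : Type*} [Fintype ι] (A : (Fin (m + 2) → ι) → ℝ) (q x : ι → ℝ) : Prop :=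
  (∀ i, 0 ≤ x i) ∧ (∀ i, 0 ≤ q i + Axm1 A x i) ∧ ∑ i, x i * (q i + Axm1 A x i) = 0

/-- Q-tensor. -/
def QTensor {m : ℕ} {ι : Type*} [Fintype ι] (A : (Fin (m + 2) → ι) → ℝ) : Prop :=
  ∀ q : ι → ℝ, ∃ x : ι → ℝ, IsTCPSol A q x

theorem stmt9 {m n : ℕ} (A : (Fin (m + 2) → Fin n) → ℝ)
    (hA : ∀ f, 0 ≤ A f) (hQ : QTensor A) (J : Finset (Fin n)) :
    QTensor (fun g : Fin (m + 2) → J => A (fun k => (g k : Fin n))) := by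
  intro q
  classical
  set q' : Fin n → ℝ := fun i => if h : i ∈ J then q ⟨i, h⟩ else 1 with hq'
  obtain ⟨x, hx0, hxf, hxc⟩ := hQ q'
  have hAx : ∀ i, 0 ≤ Axm1 A x i := fun i =>
    Finset.sum_nonneg fun f _ => mul_nonneg (hA _) (Finset.prod_nonneg fun j _ => hx0 _)
  have hterm : ∀ i, x i * (q' i + Axm1 A x i) = 0 := by
    intro i
    exact (Finset.sum_eq_zero_iff_of_nonneg
      (fun i _ => mul_nonneg (hx0 i) (hxf i))).mp hxc i (mem_univ i)
  have hxout : ∀ i, i ∉ J → x i = 0 := by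
    intro i hi
    have hqi : q' i = 1 := dif_neg hi
    have hpos : 0 < q' i + Axm1 A x i := by rw [hqi]; linarith [hAx i]
    rcases mul_eq_zero.mp (hterm i) with h1 | h2
    · exact h1
    · exact absurd h2 (ne_of_gt hpos)
  have key : ∀ i : J,
      Axm1 (fun g : Fin (m + 2) → J => A (fun k => (g k : Fin n))) (fun j : J => x j) i
        = Axm1 A x (i : Fin n) := by
    intro i
    unfold Axm1
    rw [← Finset.sum_filter_add_sum_filter_not Finset.univ
      (fun f : Fin (m + 1) → Fin n => ∀ j, f j ∈ J)]
    have h2 : ∑ f ∈ Finset.univ.filter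
        (fun f : Fin (m + 1) → Fin n => ¬ ∀ j, f j ∈ J),
        A (Fin.cons (i : Fin n) f) * ∏ j, x (f j) = 0 := by
      apply Finset.sum_eq_zero
      intro f hf
      simp only [Finset.mem_filter, not_forall] at hf
      obtain ⟨j, hj⟩ := hf.2
      have : ∏ j', x (f j') = 0 :=
        Finset.prod_eq_zero (mem_univ j) (hxout _ hj)
      rw [this, mul_zero]
    rw [h2, add_zero]
    symm
    refine Finset.sum_bij'
      (i := fun (f : Fin (m + 1) → Fin n)
          (hf : f ∈ Finset.univ.filter fun f => ∀ j, f j ∈ J) =>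
          fun j => (⟨f j, (Finset.mem_filter.mp hf).2 j⟩ : J))
      (j := fun (f : Fin (m + 1) → J) (_hf : f ∈ (Finset.univ : Finset (Fin (m + 1) → J))) =>
        fun j => (f j : Fin n))
      ?_ ?_ ?_ ?_ ?_
    · intro f _
      exact mem_univ _
    · intro f _
      simp only [Finset.mem_filter, Finset.mem_univ, true_and]
      exact fun j => (f j).2
    · intro f _
      funext j
      rfl
    · intro f _
      funext j
      rfl
    · intro f _
      congr 1
      congr 1
      funext k
      refine Fin.cases ?_ ?_ k
      · rfl
      · intro j; rfl
  refine ⟨fun i => x i, fun i => hx0 _, ?_, ?_⟩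
  · intro i
    have hqI : q' (i : Fin n) = q i := by
      rw [hq']; simp [dif_pos i.2]
    rw [key i]
    have := hxf (i : Fin n)
    rw [hqI] at this
    exact this
  · apply Finset.sum_eq_zero
    intro i _
    rw [key i]
    have hqI : q' (i : Fin n) = q i := by
      rw [hq']; simp [dif_pos i.2]
    rw [← hqI]
    exact hterm (i : Fin n)
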